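/- For every real t with 0 ≤ t < 3/(4+√6) and all real B > 0, α > 0, E > 0, there exists ν ≥ 0, depending only on t, B, α and E, such that the following holds: for every ε ∈ (0, 0.9), every integer d ≥ 1, every real Hilbert space H with an orthonormal family (ψ_i)_{i ∈ ℕᵈ}, and every square-summable family (c_i)_{i ∈ ℕᵈ} with |c_i| ≤ B·exp(−α·∑_{k=1}^d k²·i_k) for all i and u := ∑_i c_i ψ_i (converging in H) satisfying ‖u‖² ≥ E, there exists a real M ≥ 0 such that 𝔅_ε := {i ∈ ℕᵈ : ∑_k k²·i_k ≤ M} is finite with cardinality at most ε^{−ν}, and moreover: for every finite set 𝔅 of multi-indices with 𝔅_ε ⊆ 𝔅, writing c̃ ∈ ℝ^{𝔅} for the restriction of (c_i) to 𝔅 and ũ := ∑_{i∈𝔅} c_i ψ_i, for every real N×|𝔅| matrix D with ‖DᵀD − I‖ ≤ t in the ℓ²-operator norm, every y ∈ ℝᴺ and η ≥ 0 with ‖Dc̃ − y‖₂ ≤ η and η ≤ ‖u − ũ‖, and every Basis Pursuit Denoising solution ĉ at level η, the surrogate û := ∑_{i∈𝔅} ĉ_i ψ_i satisfies ‖u − û‖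 ≤ ε·‖u‖. -/

import Mathlib

/-!
Write `ũ = ∑_{i ∈ 𝔅} c_i ψ_i` and `û = ∑_{i ∈ 𝔅} ĉ_i ψ_i`. By orthonormality `‖ũ - û‖ = ‖c̃ - ĉ‖₂`,
and since `c̃` and `ĉ` both fit `y` to within `η`, the bound `‖DᵀD - I‖ ≤ t < 1`, i.e.
`‖Dv‖₂² ≥ (1 - t)‖v‖₂²`, gives `‖c̃ - ĉ‖₂ ≤ 2η/√(1 - t) ≤ 2‖u - ũ‖/√(1 - t)`. So everything reduces
to the truncation error `‖u - ũ‖`.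

With `q = e^{-α}`, the weights satisfy `∑_i q^{S(i)} = ∏_k (1 - q^{k²})⁻¹ ≤ exp (q/(1 - q)²)`
for every `d`. Every index outside `𝔅` has `S(i) > M`, so `‖u - ũ‖² ≤ B² e^{-αM} exp (q/(1 - q)²)`,
and the same weights give `#{S ≤ M} ≤ e^{αM} exp (q/(1 - q)²)`. Choosing
`αM = K + 2 log (1/ε)` with `K` depending only on `t, B, α, E` makes the error at most `ε‖u‖`
and the cardinality at most `ε^{-ν}`, because `log (1/ε) ≥ log (1/0.9)`.
-/

open Matrix

/-- The weighted total order `S(i) = ∑_{k=1}^d k²·i_k` of a multi-index `i ∈ ℕᵈ`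
(with `k` ranging over `1,…,d`). -/
def weightedOrder {d : ℕ} (i : Fin d → ℕ) : ℕ := ∑ k : Fin d, ((k : ℕ) + 1) ^ 2 * i k

/-- The ℓ¹-norm of a finitely supported real vector. -/
noncomputable def l1norm {ι : Type*} [Fintype ι] (x : ι → ℝ) : ℝ := ∑ i, |x i|

/-- The ℓ²-norm of a finitely supported real vector. -/
noncomputable def l2norm {ι : Type*} [Fintype ι] (x : ι → ℝ) : ℝ := Real.sqrt (∑ i, (x i) ^ 2)

/-- `chat` is a Basis Pursuit Denoising solution at noise level `η`. -/
def IsBPDNSolution {ι κ : Type*} [Fintype ι] [Fintype κ]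
    (D : Matrix ι κ ℝ) (y : ι → ℝ) (η : ℝ) (chat : κ → ℝ) : Prop :=
  l2norm (D.mulVec chat - y) ≤ η ∧
    ∀ c : κ → ℝ, l2norm (D.mulVec c - y) ≤ η → l1norm chat ≤ l1norm c

/-- The ℓ²-operator (spectral) norm of a square real matrix. -/
noncomputable def opNorm {ι : Type*} [Fintype ι] [DecidableEq ι] (A : Matrix ι ι ℝ) : ℝ :=
  ‖LinearMap.toContinuousLinearMap (Matrix.toEuclideanLin A)‖

section EuclideanNorms

variable {ι κ : Type*} [Fintype ι] [Fintype κ]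

lemma l2norm_eq_norm_toLp (x : ι → ℝ) : l2norm x = ‖WithLp.toLp 2 x‖ := by
  simp [l2norm, EuclideanSpace.norm_eq]

lemma l2norm_nonneg (x : ι → ℝ) : 0 ≤ l2norm x :=
  Real.sqrt_nonneg _

lemma l2norm_sub_le (x y : ι → ℝ) : l2norm (x - y) ≤ l2norm x + l2norm y := by
  simpa only [l2norm_eq_norm_toLp, WithLp.toLp_sub] using norm_sub_le _ _

lemma l2norm_sq_eq_dotProduct (x : ι → ℝ) : l2norm x ^ 2 = x ⬝ᵥ x := by
  rw [l2norm, Real.sq_sqrt (by positivity)]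
  simp only [dotProduct, sq]

lemma abs_dotProduct_le_l2norm_mul (x y : ι → ℝ) : |x ⬝ᵥ y| ≤ l2norm x * l2norm y := by
  have hinner : x ⬝ᵥ y = inner ℝ (WithLp.toLp 2 y) (WithLp.toLp 2 x) := by
    simp [EuclideanSpace.inner_eq_star_dotProduct]
  rw [hinner, l2norm_eq_norm_toLp, l2norm_eq_norm_toLp, mul_comm]
  exact abs_real_inner_le_norm _ _

lemma l2norm_mulVec_le [DecidableEq ι] (A : Matrix ι ι ℝ) (x : ι → ℝ) :
    l2norm (A *ᵥ x) ≤ opNorm A * l2norm x := by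
  rw [l2norm_eq_norm_toLp, l2norm_eq_norm_toLp]
  exact (LinearMap.toContinuousLinearMap (toEuclideanLin A)).le_opNorm (WithLp.toLp 2 x)

lemma one_sub_mul_l2norm_sq_le [DecidableEq κ] {t : ℝ} (D : Matrix ι κ ℝ)
    (hD : opNorm (Dᵀ * D - 1) ≤ t) (v : κ → ℝ) :
    (1 - t) * l2norm v ^ 2 ≤ l2norm (D *ᵥ v) ^ 2 := by
  have hgram : l2norm (D *ᵥ v) ^ 2 = l2norm v ^ 2 + v ⬝ᵥ ((Dᵀ * D - 1) *ᵥ v) := by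
    rw [l2norm_sq_eq_dotProduct, l2norm_sq_eq_dotProduct, sub_mulVec, one_mulVec,
      dotProduct_sub, ← mulVec_mulVec, dotProduct_mulVec v Dᵀ, vecMul_transpose]
    ring
  have hcs : |v ⬝ᵥ ((Dᵀ * D - 1) *ᵥ v)| ≤ t * l2norm v ^ 2 :=
    calc |v ⬝ᵥ ((Dᵀ * D - 1) *ᵥ v)| ≤ l2norm v * l2norm ((Dᵀ * D - 1) *ᵥ v) :=
          abs_dotProduct_le_l2norm_mul _ _
      _ ≤ l2norm v * (t * l2norm v) := by
          gcongr
          · exact l2norm_nonneg v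
          · exact (l2norm_mulVec_le _ _).trans (by gcongr; exact l2norm_nonneg v)
      _ = t * l2norm v ^ 2 := by ring
  linarith [neg_abs_le (v ⬝ᵥ ((Dᵀ * D - 1) *ᵥ v))]

lemma l2norm_sub_le_of_feasible [DecidableEq κ] {t η : ℝ} (D : Matrix ι κ ℝ)
    (hD : opNorm (Dᵀ * D - 1) ≤ t) (ht : t < 1) {y : ι → ℝ} {x x' : κ → ℝ}
    (hx : l2norm (D *ᵥ x - y) ≤ η) (hx' : l2norm (D *ᵥ x' - y) ≤ η) :
    l2norm (x - x') ≤ 2 * η / √(1 - t) := by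
  have hD2 : l2norm (D *ᵥ (x - x')) ≤ 2 * η := by
    rw [mulVec_sub, ← sub_sub_sub_cancel_right _ _ y]
    linarith [l2norm_sub_le (D *ᵥ x - y) (D *ᵥ x' - y)]
  have hlower : √(1 - t) * l2norm (x - x') ≤ l2norm (D *ᵥ (x - x')) := by
    rw [← Real.sqrt_sq (l2norm_nonneg (x - x')), ← Real.sqrt_mul (by linarith),
      ← Real.sqrt_sq (l2norm_nonneg (D *ᵥ (x - x')))]
    exact Real.sqrt_le_sqrt (one_sub_mul_l2norm_sq_le D hD _)
  rw [le_div_iff₀ (Real.sqrt_pos.2 (by linarith)), mul_comm]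
  exact hlower.trans hD2

end EuclideanNorms

section Orthonormal

variable {H : Type*} [NormedAddCommGroup H] [InnerProductSpace ℝ H] {ι : Type*} {ψ : ι → H}

lemma Orthonormal.norm_sum_smul_sq (hψ : Orthonormal ℝ ψ) (c : ι → ℝ) (s : Finset ι) :
    ‖∑ i ∈ s, c i • ψ i‖ ^ 2 = ∑ i ∈ s, c i ^ 2 := by
  rw [← real_inner_self_eq_norm_sq, hψ.inner_sum]
  simp [sq]

lemma Orthonormal.norm_sum_smul_eq_l2norm [Fintype ι] (hψ : Orthonormal ℝ ψ) (c : ι → ℝ) :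
    ‖∑ i, c i • ψ i‖ = l2norm c := by
  rw [l2norm, ← hψ.norm_sum_smul_sq, Real.sqrt_sq (norm_nonneg _)]

lemma Orthonormal.norm_sq_le_of_hasSum (hψ : Orthonormal ℝ ψ) {c : ι → ℝ} {u : H} {K : ℝ}
    (hu : HasSum (fun i => c i • ψ i) u) (hK : ∀ s : Finset ι, ∑ i ∈ s, c i ^ 2 ≤ K) :
    ‖u‖ ^ 2 ≤ K :=
  le_of_tendsto' (hu.norm.pow 2) fun s => (hψ.norm_sum_smul_sq c s).trans_le (hK s)

lemma Orthonormal.norm_sub_sum_le_of_feasible {κ m : Type*} [Fintype κ] [DecidableEq κ]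
    [Fintype m] {φ : κ → H} (hφ : Orthonormal ℝ φ) {t η : ℝ} (D : Matrix m κ ℝ)
    (hD : opNorm (Dᵀ * D - 1) ≤ t) (ht : t < 1) {y : m → ℝ} {c ĉ : κ → ℝ}
    (hc : l2norm (D *ᵥ c - y) ≤ η) (hĉ : l2norm (D *ᵥ ĉ - y) ≤ η) (u : H)
    (hη : η ≤ ‖u - ∑ k, c k • φ k‖) :
    ‖u - ∑ k, ĉ k • φ k‖ ≤ (1 + 2 / √(1 - t)) * ‖u - ∑ k, c k • φ k‖ := by
  have hgap : ‖∑ k, c k • φ k - ∑ k, ĉ k • φ k‖ ≤ 2 / √(1 - t) * ‖u - ∑ k, c k • φ k‖ := by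
    rw [← Finset.sum_sub_distrib]
    simp_rw [← sub_smul]
    rw [hφ.norm_sum_smul_eq_l2norm (fun k => c k - ĉ k), div_mul_eq_mul_div]
    exact (l2norm_sub_le_of_feasible D hD ht hc hĉ).trans (by gcongr)
  calc ‖u - ∑ k, ĉ k • φ k‖
      ≤ ‖u - ∑ k, c k • φ k‖ + ‖∑ k, c k • φ k - ∑ k, ĉ k • φ k‖ :=
        norm_sub_le_norm_sub_add_norm_sub _ _ _
    _ ≤ (1 + 2 / √(1 - t)) * ‖u - ∑ k, c k • φ k‖ := by linarith

end Orthonormal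

lemma sum_prod_pow_le_prod_inv_one_sub {ι : Type*} [Fintype ι] [DecidableEq ι] {r : ι → ℝ}
    (hr0 : ∀ k, 0 ≤ r k) (hr1 : ∀ k, r k < 1) (s : Finset (ι → ℕ)) :
    ∑ i ∈ s, ∏ k, r k ^ i k ≤ ∏ k, (1 - r k)⁻¹ := by
  have hbox : s ⊆ Fintype.piFinset fun k => s.image (· k) := fun i hi =>
    Fintype.mem_piFinset.2 fun k => Finset.mem_image_of_mem _ hi
  calc ∑ i ∈ s, ∏ k, r k ^ i k
      ≤ ∑ i ∈ Fintype.piFinset (fun k => s.image (· k)), ∏ k, r k ^ i k :=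
        Finset.sum_le_sum_of_subset_of_nonneg hbox fun i _ _ =>
          Finset.prod_nonneg fun k _ => pow_nonneg (hr0 k) _
    _ = ∏ k, ∑ n ∈ s.image (· k), r k ^ n := (Finset.prod_univ_sum _ _).symm
    _ ≤ ∏ k, (1 - r k)⁻¹ := by
        refine Finset.prod_le_prod (fun k _ => Finset.sum_nonneg fun n _ => pow_nonneg (hr0 k) n)
          fun k _ => ?_
        rw [← tsum_geometric_of_lt_one (hr0 k) (hr1 k)]
        exact (summable_geometric_of_lt_one (hr0 k) (hr1 k)).sum_le_tsum _
          fun n _ => pow_nonneg (hr0 k) n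

lemma inv_one_sub_le_exp_div {x : ℝ} (hx : x < 1) : (1 - x)⁻¹ ≤ Real.exp (x / (1 - x)) := by
  have hpos : 0 < 1 - x := by linarith
  calc (1 - x)⁻¹ = x / (1 - x) + 1 := by
        rw [div_add_one hpos.ne', add_sub_cancel, one_div]
    _ ≤ Real.exp (x / (1 - x)) := Real.add_one_le_exp _

lemma prod_inv_one_sub_pow_sq_le {q : ℝ} (hq0 : 0 ≤ q) (hq1 : q < 1) (d : ℕ) :
    ∏ k : Fin d, (1 - q ^ (((k : ℕ) + 1) ^ 2))⁻¹ ≤ Real.exp (q / (1 - q) ^ 2) := by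
  have hq : 0 < 1 - q := by linarith
  have hpow (k : Fin d) : q ^ (((k : ℕ) + 1) ^ 2) ≤ q ^ ((k : ℕ) + 1) :=
    pow_le_pow_of_le_one hq0 hq1.le (Nat.le_self_pow two_ne_zero _)
  have hle (k : Fin d) : q ^ (((k : ℕ) + 1) ^ 2) ≤ q :=
    (hpow k).trans (pow_le_of_le_one hq0 hq1.le (by omega))
  have hfactor (k : Fin d) :
      (1 - q ^ (((k : ℕ) + 1) ^ 2))⁻¹ ≤ Real.exp (q ^ ((k : ℕ) + 1) / (1 - q)) :=
    (inv_one_sub_le_exp_div ((hle k).trans_lt hq1)).trans <| Real.exp_le_exp.2 <|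
      div_le_div₀ (pow_nonneg hq0 _) (hpow k) hq (by linarith [hle k])
  have hgeom : ∑ k : Fin d, q ^ ((k : ℕ) + 1) ≤ q / (1 - q) := by
    have hrange : ∑ n ∈ Finset.range d, q ^ n ≤ 1 / (1 - q) := by
      have := geom_sum_Ico_le_of_lt_one (m := 0) (n := d) hq0 hq1
      rwa [← Finset.range_eq_Ico, pow_zero] at this
    simp_rw [pow_succ', ← Finset.mul_sum]
    rw [Fin.sum_univ_eq_sum_range (q ^ ·), ← mul_one_div]
    exact mul_le_mul_of_nonneg_left hrange hq0
  calc ∏ k : Fin d, (1 - q ^ (((k : ℕ) + 1) ^ 2))⁻¹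
      ≤ ∏ k : Fin d, Real.exp (q ^ ((k : ℕ) + 1) / (1 - q)) :=
        Finset.prod_le_prod (fun k _ => inv_nonneg.2 (by linarith [hle k])) fun k _ => hfactor k
    _ = Real.exp ((∑ k : Fin d, q ^ ((k : ℕ) + 1)) / (1 - q)) := by
        rw [Finset.sum_div, Real.exp_sum]
    _ ≤ Real.exp (q / (1 - q) ^ 2) := by
        rw [sq, ← div_div]
        gcongr

section WeightedOrder

variable {d : ℕ}

lemma pow_weightedOrder (q : ℝ) (i : Fin d → ℕ) :
    q ^ weightedOrder i = ∏ k : Fin d, (q ^ (((k : ℕ) + 1) ^ 2)) ^ i k := by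
  simp_rw [← pow_mul, Finset.prod_pow_eq_pow_sum, weightedOrder]

lemma exp_neg_mul_weightedOrder (α : ℝ) (i : Fin d → ℕ) :
    Real.exp (-α * weightedOrder i) = Real.exp (-α) ^ weightedOrder i := by
  rw [← Real.exp_nat_mul, mul_comm]

lemma sum_exp_neg_mul_weightedOrder_le {α : ℝ} (hα : 0 < α) (s : Finset (Fin d → ℕ)) :
    ∑ i ∈ s, Real.exp (-α * weightedOrder i) ≤
      Real.exp (Real.exp (-α) / (1 - Real.exp (-α)) ^ 2) := by
  have hq0 : 0 ≤ Real.exp (-α) := (Real.exp_pos _).le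
  have hq1 : Real.exp (-α) < 1 := Real.exp_lt_one_iff.2 (neg_lt_zero.2 hα)
  simp_rw [exp_neg_mul_weightedOrder, pow_weightedOrder]
  exact (sum_prod_pow_le_prod_inv_one_sub (fun _ => pow_nonneg hq0 _)
    (fun _ => pow_lt_one₀ hq0 hq1 (by positivity)) s).trans (prod_inv_one_sub_pow_sq_le hq0 hq1 d)

lemma le_weightedOrder (i : Fin d → ℕ) (k : Fin d) : i k ≤ weightedOrder i :=
  (Nat.le_mul_of_pos_left (i k) (by positivity : 0 < ((k : ℕ) + 1) ^ 2)).trans <|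
    Finset.single_le_sum (f := fun k : Fin d => ((k : ℕ) + 1) ^ 2 * i k) (fun _ _ => Nat.zero_le _)
      (Finset.mem_univ k)

lemma finite_setOf_weightedOrder_le (d : ℕ) (M : ℝ) :
    {i : Fin d → ℕ | (weightedOrder i : ℝ) ≤ M}.Finite :=
  (Set.finite_Iic fun _ => ⌊M⌋₊).subset fun i hi k =>
    Nat.le_floor ((Nat.cast_le.2 (le_weightedOrder i k)).trans hi)

lemma card_weightedOrder_sublevel_le {α M : ℝ} (hα : 0 < α)
    (hfin : {i : Fin d → ℕ | (weightedOrder i : ℝ) ≤ M}.Finite) :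
    (hfin.toFinset.card : ℝ) ≤
      Real.exp (α * M) * Real.exp (Real.exp (-α) / (1 - Real.exp (-α)) ^ 2) := by
  calc (hfin.toFinset.card : ℝ) = ∑ _i ∈ hfin.toFinset, (1 : ℝ) := by simp
    _ ≤ ∑ i ∈ hfin.toFinset, Real.exp (α * M) * Real.exp (-α * weightedOrder i) := by
        refine Finset.sum_le_sum fun i hi => ?_
        rw [← Real.exp_add]
        have hiM : (weightedOrder i : ℝ) ≤ M := hfin.mem_toFinset.1 hi
        exact Real.one_le_exp (by nlinarith)
    _ ≤ _ := by
        rw [← Finset.mul_sum]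
        gcongr
        exact sum_exp_neg_mul_weightedOrder_le hα _

lemma sq_le_mul_exp_of_abs_le {B α M S x : ℝ} (hα : 0 < α) (hx : |x| ≤ B * Real.exp (-α * S))
    (hMS : M < S) : x ^ 2 ≤ B ^ 2 * Real.exp (-α * M) * Real.exp (-α * S) := by
  have hB : 0 ≤ B * Real.exp (-α * S) := (abs_nonneg x).trans hx
  calc x ^ 2 = |x| ^ 2 := (sq_abs x).symm
    _ ≤ (B * Real.exp (-α * S)) ^ 2 := pow_le_pow_left₀ (abs_nonneg x) hx 2
    _ = B * Real.exp (-α * S) * (B * Real.exp (-α * S)) := sq _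
    _ ≤ B * Real.exp (-α * S) * (B * Real.exp (-α * M)) := by
        refine mul_le_mul_of_nonneg_left (mul_le_mul_of_nonneg_left ?_ ?_) hB
        · exact Real.exp_le_exp.2 (by nlinarith)
        · exact (mul_nonneg_iff_of_pos_right (Real.exp_pos _)).1 hB
    _ = B ^ 2 * Real.exp (-α * M) * Real.exp (-α * S) := by ring

lemma Orthonormal.norm_sub_sum_sq_le {H : Type*} [NormedAddCommGroup H] [InnerProductSpace ℝ H]
    {ψ : (Fin d → ℕ) → H} (hψ : Orthonormal ℝ ψ) {c : (Fin d → ℕ) → ℝ} {B α M : ℝ} (hα : 0 < α)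
    (hc : ∀ i, |c i| ≤ B * Real.exp (-α * weightedOrder i)) {u : H}
    (hu : HasSum (fun i => c i • ψ i) u) {𝔅 : Finset (Fin d → ℕ)}
    (h𝔅 : ∀ i, (weightedOrder i : ℝ) ≤ M → i ∈ 𝔅) :
    ‖u - ∑ i ∈ 𝔅, c i • ψ i‖ ^ 2 ≤
      B ^ 2 * Real.exp (-α * M) * Real.exp (Real.exp (-α) / (1 - Real.exp (-α)) ^ 2) := by
  have hcompl : HasSum (fun j : {j // j ∉ 𝔅} => c j • ψ j) (u - ∑ i ∈ 𝔅, c i • ψ i) :=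
    (Finset.hasSum_compl_iff (f := fun i => c i • ψ i) 𝔅).2 (by rwa [sub_add_cancel])
  refine (hψ.comp _ Subtype.val_injective).norm_sq_le_of_hasSum hcompl fun s => ?_
  calc ∑ j ∈ s, c j ^ 2
      ≤ ∑ j ∈ s, B ^ 2 * Real.exp (-α * M) * Real.exp (-α * weightedOrder j.1) :=
        Finset.sum_le_sum fun j _ =>
          sq_le_mul_exp_of_abs_le hα (hc j) (not_le.1 fun h => j.2 (h𝔅 j h))
    _ = B ^ 2 * Real.exp (-α * M) *
          ∑ i ∈ s.map (Function.Embedding.subtype _), Real.exp (-α * weightedOrder i) := by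
        rw [Finset.sum_map, Finset.mul_sum]
        rfl
    _ ≤ _ := by
        gcongr
        exact sum_exp_neg_mul_weightedOrder_le hα _

end WeightedOrder

lemma exp_sub_two_mul_log_le_rpow {K a ε : ℝ} (hK : 0 ≤ K) (ha : a < 1) (hε : 0 < ε)
    (hεa : ε ≤ a) : Real.exp (K - 2 * Real.log ε) ≤ ε ^ (-(2 + K / -Real.log a)) := by
  have hloga : Real.log a < 0 := Real.log_neg (hε.trans_le hεa) ha
  have hratio : 1 ≤ Real.log ε / Real.log a :=
    (one_le_div_of_neg hloga).2 (Real.log_le_log hε hεa)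
  rw [Real.rpow_def_of_pos hε, Real.exp_le_exp]
  have hK' : K ≤ K * (Real.log ε / Real.log a) := le_mul_of_one_le_right hK hratio
  calc K - 2 * Real.log ε ≤ K * (Real.log ε / Real.log a) - 2 * Real.log ε := by linarith
    _ = Real.log ε * -(2 + K / -Real.log a) := by field_simp; ring

lemma mul_exp_neg_sub_two_mul_log_le {X ε : ℝ} (hX : 0 < X) (hε : 0 < ε) :
    X * Real.exp (-(max 0 (Real.log X) - 2 * Real.log ε)) ≤ ε ^ 2 := by
  have hexp : Real.exp (-(max 0 (Real.log X) - 2 * Real.log ε)) =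
      Real.exp (-max 0 (Real.log X)) * ε ^ 2 := by
    rw [neg_sub, sub_eq_add_neg, add_comm, Real.exp_add, ← Real.log_rpow hε,
      Real.exp_log (by positivity), Real.rpow_two]
  calc X * Real.exp (-(max 0 (Real.log X) - 2 * Real.log ε))
      ≤ X * (Real.exp (-Real.log X) * ε ^ 2) := by
        rw [hexp]
        gcongr
        exact le_max_right _ _
    _ = ε ^ 2 := by rw [Real.exp_neg, Real.exp_log hX, ← mul_assoc, mul_inv_cancel₀ hX.ne', one_mul]

/-- Corollary 4.9 (dimension-independent recovery), deterministic content: for exponentially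
decaying polynomial chaos coefficients there is an anisotropic order basis `𝔅_ε` with at most
`ε^{−ν}` elements (with `ν` independent of the dimension `d`) such that for any basis
`𝔅 ⊇ 𝔅_ε` and any design matrix satisfying the isometry bound `‖DᵀD − I‖ ≤ t`, the
Basis Pursuit Denoising surrogate attains relative error at most `ε`. -/
theorem dimension_independent_recovery :
    ∀ t : ℝ, 0 ≤ t → t < 3 / (4 + Real.sqrt 6) →
    ∀ B α E : ℝ, 0 < B → 0 < α → 0 < E →
    ∃ ν : ℝ, 0 ≤ ν ∧
      ∀ ε : ℝ, 0 < ε → ε < 0.9 →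
      ∀ d : ℕ, 1 ≤ d →
      ∀ (H : Type) [NormedAddCommGroup H] [InnerProductSpace ℝ H],
      ∀ ψ : (Fin d → ℕ) → H, Orthonormal ℝ ψ →
      ∀ c : (Fin d → ℕ) → ℝ, Summable (fun i => (c i) ^ 2) →
      (∀ i : Fin d → ℕ, |c i| ≤ B * Real.exp (-α * (weightedOrder i : ℝ))) →
      ∀ u : H, HasSum (fun i => c i • ψ i) u → E ≤ ‖u‖ ^ 2 →
      ∃ M : ℝ, 0 ≤ M ∧
        ∃ hfin : {i : Fin d → ℕ | (weightedOrder i : ℝ) ≤ M}.Finite,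
          (hfin.toFinset.card : ℝ) ≤ ε ^ (-ν) ∧
            ∀ 𝔅 : Finset (Fin d → ℕ), hfin.toFinset ⊆ 𝔅 →
            ∀ (N : ℕ) (D : Matrix (Fin N) {i // i ∈ 𝔅} ℝ),
              opNorm (Dᵀ * D - 1) ≤ t →
            ∀ (y : Fin N → ℝ) (η : ℝ), 0 ≤ η →
              l2norm (D.mulVec (fun i : {i // i ∈ 𝔅} => c i.1) - y) ≤ η →
              η ≤ ‖u - ∑ i ∈ 𝔅, c i • ψ i‖ →
            ∀ chat : {i // i ∈ 𝔅} → ℝ, IsBPDNSolution D y η chat →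
              ‖u - ∑ i : {i // i ∈ 𝔅}, chat i • ψ i.1‖ ≤ ε * ‖u‖ := by
  intro t _ ht B α E hB hα hE
  have ht1 : t < 1 :=
    ht.trans_le <| (div_le_one (by positivity)).2 (by linarith [Real.sqrt_nonneg 6])
  set C := 1 + 2 / √(1 - t)
  have hC : 0 < C := by positivity
  set Q := Real.exp (-α) / (1 - Real.exp (-α)) ^ 2
  set K := max 0 (Real.log (C ^ 2 * B ^ 2 * Real.exp Q / E))
  have hQ : 0 ≤ Q := div_nonneg (Real.exp_pos _).le (sq_nonneg _)
  have hL : 0 < -Real.log 0.9 := neg_pos.2 (Real.log_neg (by norm_num) (by norm_num))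
  refine ⟨2 + (K + Q) / -Real.log 0.9, by positivity, ?_⟩
  intro ε hε0 hε9 d _ H _ _ ψ hψ c _ hc u hu hEu
  set M := (K - 2 * Real.log ε) / α
  have hαM : α * M = K - 2 * Real.log ε := mul_div_cancel₀ _ hα.ne'
  have hK : 0 ≤ K := le_max_left _ _
  have hlogε : Real.log ε < 0 := Real.log_neg hε0 (by linarith)
  have hM : 0 ≤ M := div_nonneg (by linarith) hα.le
  refine ⟨M, hM, finite_setOf_weightedOrder_le d M, ?_, ?_⟩
  · calc _ ≤ Real.exp (α * M) * Real.exp Q := card_weightedOrder_sublevel_le hα _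
      _ = Real.exp (K + Q - 2 * Real.log ε) := by rw [← Real.exp_add, hαM]; congr 1; ring
      _ ≤ _ := exp_sub_two_mul_log_le_rpow (by positivity) (by norm_num) hε0 hε9.le
  · intro 𝔅 h𝔅 N D hD y η _ hfeas hη chat hchat
    have htail : ‖u - ∑ i ∈ 𝔅, c i • ψ i‖ ^ 2 ≤ (ε * ‖u‖ / C) ^ 2 :=
      calc _ ≤ B ^ 2 * Real.exp (-α * M) * Real.exp Q :=
            hψ.norm_sub_sum_sq_le hα hc hu fun i hi => h𝔅 ((Set.Finite.mem_toFinset _).2 hi)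
        _ = C ^ 2 * B ^ 2 * Real.exp Q / E * Real.exp (-(K - 2 * Real.log ε)) * E / C ^ 2 := by
            rw [neg_mul, hαM]
            field_simp
        _ ≤ ε ^ 2 * ‖u‖ ^ 2 / C ^ 2 := by
            gcongr
            exact mul_exp_neg_sub_two_mul_log_le (by positivity) hε0
        _ = (ε * ‖u‖ / C) ^ 2 := by rw [div_pow, mul_pow]
    have hη' : η ≤ ‖u - ∑ i : 𝔅, c i • ψ i‖ := by rwa [Finset.sum_coe_sort 𝔅 fun i => c i • ψ i]
    have hrec : ‖u - ∑ i : 𝔅, chat i • ψ i‖ ≤ C * ‖u - ∑ i ∈ 𝔅, c i • ψ i‖ := by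
      rw [← Finset.sum_coe_sort 𝔅 fun i => c i • ψ i]
      exact (hψ.comp _ Subtype.val_injective).norm_sub_sum_le_of_feasible D hD ht1 hfeas
        hchat.1 u hη'
    calc _ ≤ C * ‖u - ∑ i ∈ 𝔅, c i • ψ i‖ := hrec
      _ ≤ C * (ε * ‖u‖ / C) := by gcongr; exact le_of_sq_le_sq htail (by positivity)
      _ = ε * ‖u‖ := mul_div_cancel₀ _ hC.ne'
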